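/- Let S ≥ 1, let v = (v_1,…,v_S) ∈ ℂ^S have pairwise distinct entries, let u_1,…,u_{S+1} ∈ ℂ be pairwise distinct with u_μ ≠ v_ℓ for all μ,ℓ, and let a_0,…,a_S ∈ ℂ. For any S-tuple x set Y(x) := Σ_{p=0}^{S} a_p σ_p(x). Then for all 1 ≤ j, k ≤ S+1: Σ_{ℓ=1}^{S} g(u_j,v_ℓ) · Y(v^{(ℓ→u_j)}) · g(u_k,v_ℓ) · [ (∏_{i≠ℓ} g(v_i,v_ℓ)) / (∏_{μ=1}^{S+1} g(u_μ,v_ℓ)) ] = −δ_{jk} · (∏_{ℓ=1}^{S} g(u_j,v_ℓ)) · Y(v) / (∏_{μ≠j} g(u_j,u_μ)) + Y(û_k), where v^{(ℓ→u_j)} is the S-tuple obtained from v by replacing v_ℓ with u_j, and û_k is the S-tuple (u_1,…,u_{S+1}) with u_k omitted. -/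

import Mathlib

/-!
`Y a w` is a linear functional of the monic polynomial `∏ i, (X - w i)` (Vieta). Applying it to
the Lagrange interpolation of `∏_{μ ≠ k} (X - u μ)`, a polynomial of degree `S`, at the `S + 1`
nodes `u j, v 1, …, v S` gives the identity: the interpolation basis consists of the nodal
polynomials of `v` and of the tuples `v^{(ℓ→u_j)}`, and the quotients of products of `g` are
exactly the interpolation weights.
-/

/-- `g c x y = c / (x - y)`. -/
noncomputable def g (c x y : ℂ) : ℂ := c / (x - y)

/-- `esym w p` is the `p`-th elementary symmetric polynomial of the entries of `w`;
it equals `1` for `p = 0` and `0` for `p` larger than the number of entries. -/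
noncomputable def esym {m : ℕ} (w : Fin m → ℂ) (p : ℕ) : ℂ :=
  ∑ s ∈ Finset.powersetCard p Finset.univ, ∏ i ∈ s, w i

/-- `Y a w = ∑_{p=0}^{S} a p * σ_p(w)`. -/
noncomputable def Y {S : ℕ} (a : Fin (S + 1) → ℂ) (w : Fin S → ℂ) : ℂ :=
  ∑ p : Fin (S + 1), a p * esym w (p : ℕ)

open Polynomial Finset Lagrange

theorem prod_erase_eq_prod_succAbove {M : Type*} [CommMonoid M] {n : ℕ} (f : Fin (n + 1) → M)
    (j : Fin (n + 1)) : ∏ μ ∈ univ.erase j, f μ = ∏ i, f (j.succAbove i) := by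
  rw [← compl_singleton, ← Fin.image_succAbove_univ, prod_image Fin.succAbove_right_injective.injOn]

theorem prod_comp_update_eq_mul_prod_erase {ι α M : Type*} [Fintype ι] [DecidableEq ι]
    [CommMonoid M] (h : α → M) (v : ι → α) (ℓ : ι) (x : α) :
    ∏ i, h (Function.update v ℓ x i) = h x * ∏ i ∈ univ.erase ℓ, h (v i) := by
  have := prod_update_of_mem (mem_univ ℓ) (h ∘ v) (h x)
  rwa [← Function.comp_update, sdiff_singleton_eq_erase] at this

theorem natDegree_nodal_univ {R : Type*} [CommRing R] [Nontrivial R] {n : ℕ} (w : Fin n → R) :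
    (nodal univ w).natDegree = n := by
  rw [natDegree_nodal, card_univ, Fintype.card_fin]

theorem eval_nodal_comp_succAbove {R : Type*} [CommRing R] {n : ℕ} (u : Fin (n + 1) → R)
    (j k : Fin (n + 1)) : (nodal univ (u ∘ k.succAbove)).eval (u j) =
      if j = k then ∏ i, (u j - u (j.succAbove i)) else 0 := by
  split_ifs with hjk
  · rw [hjk, eval_nodal]; rfl
  · obtain ⟨i, hi⟩ := Fin.exists_succAbove_eq hjk
    rw [← hi]
    exact eval_nodal_at_node (v := u ∘ k.succAbove) (mem_univ i)

theorem eq_interpolate_nodal_update {K : Type*} [Field K] {S : ℕ} {v : Fin S → K}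
    (hv : Function.Injective v) {x : K} (hx : ∀ ℓ, x ≠ v ℓ) {F : K[X]} (hF : F.natDegree ≤ S) :
    F = C (F.eval x / (nodal univ v).eval x) * nodal univ v +
      ∑ ℓ, C (F.eval (v ℓ) / (nodal univ (Function.update v ℓ x)).eval (v ℓ)) *
        nodal univ (Function.update v ℓ x) := by
  have hnodes : x ∉ univ.map ⟨v, hv⟩ := by simpa using fun ℓ => (hx ℓ).symm
  have hdeg : ∀ P : K[X], P.natDegree ≤ S → P.degree < #(cons x (univ.map ⟨v, hv⟩) hnodes) := by
    intro P hP
    rw [card_cons, card_map, card_univ, Fintype.card_fin]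
    exact (degree_le_of_natDegree_le hP).trans_lt (by exact_mod_cast Nat.lt_succ_self S)
  refine eq_of_degrees_lt_of_eval_finset_eq _ (hdeg F hF) (hdeg _ ?_) ?_
  · have hCmul : ∀ (b : K) (w : Fin S → K), (C b * nodal univ w).natDegree ≤ S := fun b w =>
      (natDegree_C_mul_le _ _).trans (natDegree_nodal_univ w).le
    exact natDegree_add_le_of_degree_le (hCmul _ v)
      (natDegree_sum_le_of_forall_le _ _ fun ℓ _ => hCmul _ _)
  intro y hy
  simp only [eval_add, eval_mul, eval_C, eval_finsetSum]
  rcases mem_cons.1 hy with rfl | hy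
  · have hupdate : ∀ ℓ, (nodal univ (Function.update v ℓ y)).eval y = 0 := fun ℓ => by
      simpa using eval_nodal_at_node (v := Function.update v ℓ y) (mem_univ ℓ)
    simp only [hupdate, mul_zero, sum_const_zero, add_zero]
    rw [div_mul_cancel₀ _ (eval_nodal_not_at_node fun ℓ _ => hx ℓ)]
  · obtain ⟨m, -, rfl⟩ := mem_map.1 hy
    simp only [Function.Embedding.coeFn_mk]
    have hoff : ∀ ℓ ≠ m, (nodal univ (Function.update v ℓ x)).eval (v m) = 0 := fun ℓ hℓ => by
      simpa [Function.update_of_ne hℓ.symm] using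
        eval_nodal_at_node (v := Function.update v ℓ x) (mem_univ m)
    have hon : (nodal univ (Function.update v m x)).eval (v m) ≠ 0 := by
      refine eval_nodal_not_at_node fun i _ => ?_
      rcases eq_or_ne i m with rfl | hi
      · simpa using (hx i).symm
      · simpa [Function.update_of_ne hi] using hv.ne hi.symm
    rw [eval_nodal_at_node (mem_univ m), mul_zero, zero_add,
      sum_eq_single m (fun ℓ _ hℓ => by rw [hoff ℓ hℓ, mul_zero]) (by simp),
      div_mul_cancel₀ _ hon]

theorem coeff_nodal_univ_sub {m p : ℕ} (w : Fin m → ℂ) (hp : p ≤ m) :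
    (nodal univ w).coeff (m - p) = (-1) ^ p * esym w p := by
  have h := Multiset.prod_X_sub_C_coeff (univ.val.map w) (k := m - p) (by simp)
  rw [Multiset.map_map, Multiset.card_map, card_val, card_univ, Fintype.card_fin,
    Nat.sub_sub_self hp] at h
  rw [esym, ← esymm_map_val, ← h]
  rfl

noncomputable def yFunctional {S : ℕ} (a : Fin (S + 1) → ℂ) : ℂ[X] →ₗ[ℂ] ℂ :=
  ∑ p : Fin (S + 1), (a p * (-1) ^ (p : ℕ)) • lcoeff ℂ (S - p)

theorem Y_eq_yFunctional_nodal {S : ℕ} (a : Fin (S + 1) → ℂ) (w : Fin S → ℂ) :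
    Y a w = yFunctional a (nodal univ w) := by
  simp only [Y, yFunctional, LinearMap.sum_apply, LinearMap.smul_apply, lcoeff_apply, smul_eq_mul]
  refine sum_congr rfl fun p _ => ?_
  rw [coeff_nodal_univ_sub w (Nat.lt_succ_iff.mp p.isLt), ← mul_assoc, mul_assoc (a p),
    ← pow_add, Even.neg_one_pow ⟨_, rfl⟩, mul_one]

theorem prod_g_left {ι : Type*} (c y : ℂ) (w : ι → ℂ) (s : Finset ι) :
    ∏ i ∈ s, g c (w i) y = (-c) ^ #s / ∏ i ∈ s, (y - w i) := by
  simp_rw [g, ← neg_div_neg_eq c, neg_sub, prod_div_distrib, prod_const]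

theorem prod_g_right {ι : Type*} (c x : ℂ) (w : ι → ℂ) (s : Finset ι) :
    ∏ i ∈ s, g c x (w i) = c ^ #s / ∏ i ∈ s, (x - w i) := by
  simp_rw [g, prod_div_distrib, prod_const]

theorem prod_g_left_div_prod_g_left {ι : Type*} [Fintype ι] {c : ℂ} (hc : c ≠ 0) (y : ℂ)
    (w w' : ι → ℂ) :
    (∏ i, g c (w i) y) / ∏ i, g c (w' i) y = (∏ i, (y - w' i)) / ∏ i, (y - w i) := by
  rw [prod_g_left, prod_g_left, div_div_div_cancel_left' _ _ (pow_ne_zero _ (neg_ne_zero.2 hc))]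

theorem prod_g_right_div_prod_g_right {ι : Type*} [Fintype ι] {c : ℂ} (hc : c ≠ 0) (x : ℂ)
    (w w' : ι → ℂ) :
    (∏ i, g c x (w i)) / ∏ i, g c x (w' i) = (∏ i, (x - w' i)) / ∏ i, (x - w i) := by
  rw [prod_g_right, prod_g_right, div_div_div_cancel_left' _ _ (pow_ne_zero _ hc)]

theorem prod_g_ratio_eq_interpolation_weight {c : ℂ} (hc : c ≠ 0) {S : ℕ} (v : Fin S → ℂ)
    {u : Fin (S + 1) → ℂ} (j k : Fin (S + 1)) (ℓ : Fin S) (hkℓ : u k ≠ v ℓ) :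
    g c (u j) (v ℓ) * g c (u k) (v ℓ) *
        ((∏ i ∈ univ.erase ℓ, g c (v i) (v ℓ)) / ∏ μ, g c (u μ) (v ℓ)) =
      (nodal univ (u ∘ k.succAbove)).eval (v ℓ) /
        (nodal univ (Function.update v ℓ (u j))).eval (v ℓ) := by
  have hk : g c (u k) (v ℓ) ≠ 0 := div_ne_zero hc (sub_ne_zero.2 hkℓ)
  rw [eval_nodal, eval_nodal, ← prod_g_left_div_prod_g_left hc,
    prod_comp_update_eq_mul_prod_erase (fun x => g c x (v ℓ)), Fin.prod_univ_succAbove _ k]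
  simp only [Function.comp_apply]
  field_simp

theorem kronecker_prod_g_ratio_eq_interpolation_weight {c : ℂ} (hc : c ≠ 0) {S : ℕ}
    (v : Fin S → ℂ) (u : Fin (S + 1) → ℂ) (j k : Fin (S + 1)) :
    (if j = k then 1 else 0) * ((∏ ℓ, g c (u j) (v ℓ)) / ∏ μ ∈ univ.erase j, g c (u j) (u μ)) =
      (nodal univ (u ∘ k.succAbove)).eval (u j) / (nodal univ v).eval (u j) := by
  rw [eval_nodal_comp_succAbove, eval_nodal, prod_erase_eq_prod_succAbove,
    prod_g_right_div_prod_g_right hc]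
  split_ifs <;> simp

theorem appendix_sum_identity_general (c : ℂ) (hc : c ≠ 0) (S : ℕ)
    (v : Fin S → ℂ) (hv : Function.Injective v)
    (u : Fin (S + 1) → ℂ)
    (huv : ∀ (μ : Fin (S + 1)) (ℓ : Fin S), u μ ≠ v ℓ)
    (a : Fin (S + 1) → ℂ) (j k : Fin (S + 1)) :
    ∑ ℓ : Fin S,
        g c (u j) (v ℓ) * Y a (Function.update v ℓ (u j)) * g c (u k) (v ℓ) *
          ((∏ i ∈ Finset.univ.erase ℓ, g c (v i) (v ℓ)) / (∏ μ, g c (u μ) (v ℓ)))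
      = -(if j = k then 1 else 0) *
            ((∏ ℓ, g c (u j) (v ℓ)) * Y a v / (∏ μ ∈ Finset.univ.erase j, g c (u j) (u μ)))
          + Y a (u ∘ k.succAbove) := by
  have hY := congrArg (yFunctional a) (eq_interpolate_nodal_update hv (fun ℓ => huv j ℓ)
    (natDegree_nodal_univ (u ∘ k.succAbove)).le)
  simp only [map_add, map_sum, ← smul_eq_C_mul, map_smul, smul_eq_mul,
    ← Y_eq_yFunctional_nodal] at hY
  calc _ = ∑ ℓ, (nodal univ (u ∘ k.succAbove)).eval (v ℓ) /
          (nodal univ (Function.update v ℓ (u j))).eval (v ℓ) * Y a (Function.update v ℓ (u j)) :=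
        sum_congr rfl fun ℓ _ => by
          rw [← prod_g_ratio_eq_interpolation_weight hc v j k ℓ (huv k ℓ)]
          ring
    _ = _ := by
      rw [hY, ← kronecker_prod_g_ratio_eq_interpolation_weight hc]
      ring

/-- the appendix summation identity
`∑_ℓ g(u_j,v_ℓ) Y(v^{(ℓ→u_j)}) g(u_k,v_ℓ) (∏_{i≠ℓ} g(v_i,v_ℓ)) / (∏_μ g(u_μ,v_ℓ))
  = -δ_{jk} (∏_ℓ g(u_j,v_ℓ)) Y(v) / (∏_{μ≠j} g(u_j,u_μ)) + Y(û_k)`. -/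
theorem appendix_sum_identity (c : ℂ) (hc : c ≠ 0) (S : ℕ) (hS : 1 ≤ S)
    (v : Fin S → ℂ) (hv : Function.Injective v)
    (u : Fin (S + 1) → ℂ) (hu : Function.Injective u)
    (huv : ∀ (μ : Fin (S + 1)) (ℓ : Fin S), u μ ≠ v ℓ)
    (a : Fin (S + 1) → ℂ) (j k : Fin (S + 1)) :
    ∑ ℓ : Fin S,
        g c (u j) (v ℓ) * Y a (Function.update v ℓ (u j)) * g c (u k) (v ℓ) *
          ((∏ i ∈ Finset.univ.erase ℓ, g c (v i) (v ℓ)) / (∏ μ, g c (u μ) (v ℓ)))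
      = -(if j = k then 1 else 0) *
            ((∏ ℓ, g c (u j) (v ℓ)) * Y a v / (∏ μ ∈ Finset.univ.erase j, g c (u j) (u μ)))
          + Y a (u ∘ k.succAbove) :=
  appendix_sum_identity_general c hc S v hv u huv a j k
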